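/- A pseudo equality algebra A is commutative if and only if {1} is a commutative deductive system of A. -/
import Mathlib


/-- A pseudo equality algebra (JK-algebra). -/
structure PEA (A : Type*) where
  meet : A → A → A
  sim : A → A → A      -- x ∼ y
  bsim : A → A → A     -- x ∽ y
  one : A
  meet_comm : ∀ x y, meet x y = meet y x
  meet_assoc : ∀ x y z, meet (meet x y) z = meet x (meet y z)
  meet_idem : ∀ x, meet x x = x
  meet_one : ∀ x, meet x one = x                      -- 1 is top
  sim_self : ∀ x, sim x x = one                       -- (A2)
  bsim_self : ∀ x, bsim x x = one
  sim_one : ∀ x, sim x one = x                        -- (A3)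
  one_bsim : ∀ x, bsim one x = x
  A4a : ∀ x y z, meet x y = x → meet y z = y → meet (sim x z) (sim y z) = sim x z
  A4b : ∀ x y z, meet x y = x → meet y z = y → meet (sim x z) (sim x y) = sim x z
  A4c : ∀ x y z, meet x y = x → meet y z = y → meet (bsim z x) (bsim z y) = bsim z x
  A4d : ∀ x y z, meet x y = x → meet y z = y → meet (bsim z x) (bsim y x) = bsim z x
  A5a : ∀ x y z, meet (sim x y) (sim (meet x z) (meet y z)) = sim x y
  A5b : ∀ x y z, meet (bsim x y) (bsim (meet x z) (meet y z)) = bsim x y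
  A6a : ∀ x y z, meet (sim x y) (bsim (sim z x) (sim z y)) = sim x y
  A6b : ∀ x y z, meet (bsim x y) (sim (bsim x z) (bsim y z)) = bsim x y
  A7a : ∀ x y z, meet (sim x y) (sim (sim x z) (sim y z)) = sim x y
  A7b : ∀ x y z, meet (bsim x y) (bsim (bsim z x) (bsim z y)) = bsim x y

namespace PEA

variable {A : Type*}

/-- The induced order: x ≤ y iff x ∧ y = x. -/
def le (P : PEA A) (x y : A) : Prop := P.meet x y = x

/-- x ∨₁ y = (x∧y ∼ x) ∽ y. -/
def v1 (P : PEA A) (x y : A) : A := P.bsim (P.sim (P.meet x y) x) y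

/-- x ∨₂ y = y ∼ (x ∽ x∧y). -/
def v2 (P : PEA A) (x y : A) : A := P.sim y (P.bsim x (P.meet x y))

/-- x → y = x∧y ∼ x. -/
def arrow (P : PEA A) (x y : A) : A := P.sim (P.meet x y) x

/-- x ⇝ y = x ∽ x∧y. -/
def squig (P : PEA A) (x y : A) : A := P.bsim x (P.meet x y)

/-- Invariance: x∧y ∼ y = x ∼ y and x ∽ x∧y = x ∽ y. -/
def Invariant (P : PEA A) : Prop :=
  ∀ x y, P.sim (P.meet x y) y = P.sim x y ∧ P.bsim x (P.meet x y) = P.bsim x y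

/-- Commutativity: (x∧y∼x)∽y = (x∧y∼y)∽x and y∼(x∽x∧y) = x∼(y∽x∧y). -/
def Commutative (P : PEA A) : Prop :=
  ∀ x y, P.bsim (P.sim (P.meet x y) x) y = P.bsim (P.sim (P.meet x y) y) x ∧
    P.sim y (P.bsim x (P.meet x y)) = P.sim x (P.bsim y (P.meet x y))

/-- D is an upset. -/
def IsUpset (P : PEA A) (D : Set A) : Prop := ∀ x y, x ∈ D → P.le x y → y ∈ D

/-- Deductive system. -/
def IsDS (P : PEA A) (D : Set A) : Prop :=
  P.one ∈ D ∧ P.IsUpset D ∧ ∀ x y, x ∈ D → P.sim y x ∈ D → y ∈ D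

/-- Commutative deductive system. -/
def IsCommDS (P : PEA A) (D : Set A) : Prop :=
  P.IsDS D ∧
  (∀ x y, P.sim (P.meet x y) y ∈ D → P.sim x (P.bsim (P.sim (P.meet x y) x) y) ∈ D) ∧
  (∀ x y, P.bsim y (P.meet x y) ∈ D → P.bsim (P.sim y (P.bsim x (P.meet x y))) x ∈ D)

/-- Normal deductive system. -/
def IsNormalDS (P : PEA A) (D : Set A) : Prop :=
  P.IsDS D ∧ ∀ x y, (P.sim x y ∈ D ∧ P.sim y x ∈ D) ↔ (P.bsim y x ∈ D ∧ P.bsim x y ∈ D)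

/-- Measure: m(y∼x) = m(x∽y) = m(y) − m(x) whenever y ≤ x, with values in [0,∞). -/
def IsMeasure (P : PEA A) (m : A → ℝ) : Prop :=
  (∀ x, 0 ≤ m x) ∧
  ∀ x y, P.le y x → m (P.sim y x) = m y - m x ∧ m (P.bsim x y) = m y - m x

end PEA

namespace PEA

variable {A : Type*} (P : PEA A)

lemma le_refl' (x : A) : P.le x x := P.meet_idem x

lemma le_trans' {x y z : A} (h1 : P.le x y) (h2 : P.le y z) : P.le x z := by
  show P.meet x z = x
  calc P.meet x z = P.meet (P.meet x y) z := by rw [show P.meet x y = x from h1]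
    _ = P.meet x (P.meet y z) := P.meet_assoc x y z
    _ = P.meet x y := by rw [show P.meet y z = y from h2]
    _ = x := h1

lemma le_antisymm' {x y : A} (h1 : P.le x y) (h2 : P.le y x) : x = y := by
  have e1 : P.meet x y = x := h1
  have e2 : P.meet y x = y := h2
  rw [← e1, P.meet_comm, e2]

lemma le_top' (x : A) : P.le x P.one := P.meet_one x

lemma meet_le_left (x y : A) : P.le (P.meet x y) x := by
  show P.meet (P.meet x y) x = P.meet x y
  rw [P.meet_comm (P.meet x y) x, ← P.meet_assoc, P.meet_idem]

lemma meet_le_right (x y : A) : P.le (P.meet x y) y := by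
  show P.meet (P.meet x y) y = P.meet x y
  rw [P.meet_assoc, P.meet_idem]

lemma le_simm (x z : A) : P.le x (P.sim (P.meet x z) z) := by
  have h := P.A5a x P.one z
  rw [P.sim_one x, P.meet_comm P.one z, P.meet_one z] at h
  exact h

lemma le_bsimm (x z : A) : P.le x (P.bsim z (P.meet x z)) := by
  have h := P.A5b P.one x z
  rw [P.one_bsim x, P.meet_comm P.one z, P.meet_one z] at h
  exact h

lemma le_bsim_sim (x z : A) : P.le x (P.bsim (P.sim z x) z) := by
  have h := P.A6a x P.one z
  rw [P.sim_one x, P.sim_one z] at h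
  exact h

lemma le_sim_bsim (x z : A) : P.le x (P.sim z (P.bsim x z)) := by
  have h := P.A6b P.one x z
  rw [P.one_bsim x, P.one_bsim z] at h
  exact h

lemma le_of_sim_eq_one {a c : A} (h : P.sim c a = P.one) : P.le a c := by
  have h2 := P.le_bsim_sim a c
  rwa [h, P.one_bsim] at h2

lemma le_of_bsim_eq_one {a c : A} (h : P.bsim a c = P.one) : P.le a c := by
  have h2 := P.le_sim_bsim a c
  rwa [h, P.sim_one] at h2

/-- Key inequality for the first commutativity identity. -/
lemma ineq1 (dag : ∀ a b, P.le b a → P.bsim (P.sim b a) b = a) (x y : A) :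
    P.le (P.bsim (P.sim (P.meet x y) y) x) (P.bsim (P.sim (P.meet x y) x) y) := by
  have hmy : P.le (P.meet x y) y := P.meet_le_right x y
  have hy_s : P.le y (P.sim (P.meet x y) x) := by
    have h := P.le_simm y x
    rwa [P.meet_comm y x] at h
  -- x ≤ u where u = bsim (sim (x∧y) x) y
  have hx1 : P.le x (P.bsim (P.sim (P.meet x y) x) (P.meet x y)) := P.le_bsim_sim x (P.meet x y)
  have hx2 : P.le (P.bsim (P.sim (P.meet x y) x) (P.meet x y))
      (P.bsim (P.sim (P.meet x y) x) y) := P.A4c _ _ _ hmy hy_s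
  have hxu : P.le x (P.bsim (P.sim (P.meet x y) x) y) := P.le_trans' hx1 hx2
  have hyu : P.le y (P.bsim (P.sim (P.meet x y) x) y) := by
    have h := P.A4d y (P.sim (P.meet x y) x) P.one hy_s (P.le_top' _)
    rwa [P.one_bsim y] at h
  have hchar : P.bsim (P.sim x (P.bsim (P.sim (P.meet x y) x) y)) x
      = P.bsim (P.sim (P.meet x y) x) y := dag _ x hxu
  have hxu' : P.meet x (P.bsim (P.sim (P.meet x y) x) y) = x := hxu
  have hxs : P.le x (P.sim x (P.bsim (P.sim (P.meet x y) x) y)) := by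
    have h := P.le_simm x (P.bsim (P.sim (P.meet x y) x) y)
    rwa [hxu'] at h
  have hss : P.le (P.sim x (P.bsim (P.sim (P.meet x y) x) y)) (P.sim (P.meet x y) y) := by
    have h := P.A5a x (P.bsim (P.sim (P.meet x y) x) y) y
    have hm : P.meet (P.bsim (P.sim (P.meet x y) x) y) y = y := by
      rw [P.meet_comm]; exact hyu
    rwa [hm] at h
  have hfin := P.A4d x (P.sim x (P.bsim (P.sim (P.meet x y) x) y)) (P.sim (P.meet x y) y) hxs hss
  rwa [hchar] at hfin

/-- Key inequality for the second commutativity identity. -/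
lemma ineq2 (ddag : ∀ a b, P.le b a → P.sim b (P.bsim a b) = a) (x y : A) :
    P.le (P.sim x (P.bsim y (P.meet x y))) (P.sim y (P.bsim x (P.meet x y))) := by
  have hmy : P.le (P.meet x y) y := P.meet_le_right x y
  have hyq : P.le y (P.bsim x (P.meet x y)) := by
    have h := P.le_bsimm y x
    rwa [P.meet_comm y x] at h
  have hx1 : P.le x (P.sim (P.meet x y) (P.bsim x (P.meet x y))) := P.le_sim_bsim x (P.meet x y)
  have hx2 : P.le (P.sim (P.meet x y) (P.bsim x (P.meet x y)))
      (P.sim y (P.bsim x (P.meet x y))) := P.A4a _ _ _ hmy hyq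
  have hxu : P.le x (P.sim y (P.bsim x (P.meet x y))) := P.le_trans' hx1 hx2
  have hyq' : P.meet y (P.bsim x (P.meet x y)) = y := hyq
  have hyu : P.le y (P.sim y (P.bsim x (P.meet x y))) := by
    have h := P.le_simm y (P.bsim x (P.meet x y))
    rwa [hyq'] at h
  have hchar : P.sim x (P.bsim (P.sim y (P.bsim x (P.meet x y))) x)
      = P.sim y (P.bsim x (P.meet x y)) := ddag _ x hxu
  have hxu' : P.meet x (P.sim y (P.bsim x (P.meet x y))) = x := hxu
  have hxb : P.le x (P.bsim (P.sim y (P.bsim x (P.meet x y))) x) := by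
    have h := P.le_bsimm x (P.sim y (P.bsim x (P.meet x y)))
    rwa [hxu'] at h
  have hbb : P.le (P.bsim (P.sim y (P.bsim x (P.meet x y))) x) (P.bsim y (P.meet x y)) := by
    have h := P.A5b (P.sim y (P.bsim x (P.meet x y))) x y
    have hm : P.meet (P.sim y (P.bsim x (P.meet x y))) y = y := by
      rw [P.meet_comm]; exact hyu
    rwa [hm] at h
  have hfin := P.A4b x (P.bsim (P.sim y (P.bsim x (P.meet x y))) x) (P.bsim y (P.meet x y)) hxb hbb
  rwa [hchar] at hfin

end PEA

theorem stmt12 {A : Type*} (P : PEA A) :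
    P.Commutative ↔ P.IsCommDS {P.one} := by
  constructor
  · intro hcomm
    refine ⟨⟨rfl, ?_, ?_⟩, ?_, ?_⟩
    · intro x y hx hle
      have hx1 : x = P.one := hx
      rw [hx1] at hle
      have h1 : P.meet P.one y = P.one := hle
      have h2 : P.meet P.one y = y := by rw [P.meet_comm]; exact P.meet_one y
      exact (h2.symm.trans h1 : y = P.one)
    · intro x y hx hyx
      have hx1 : x = P.one := hx
      have hyx1 : P.sim y x = P.one := hyx
      rw [hx1, P.sim_one y] at hyx1
      exact hyx1
    · intro x y hmem
      have h1 : P.sim (P.meet x y) y = P.one := hmem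
      show P.sim x (P.bsim (P.sim (P.meet x y) x) y) = P.one
      rw [(hcomm x y).1, h1, P.one_bsim, P.sim_self]
    · intro x y hmem
      have h1 : P.bsim y (P.meet x y) = P.one := hmem
      show P.bsim (P.sim y (P.bsim x (P.meet x y))) x = P.one
      rw [(hcomm x y).2, h1, P.sim_one, P.bsim_self]
  · rintro ⟨_, C2, C3⟩
    have dag : ∀ a b, P.le b a → P.bsim (P.sim b a) b = a := by
      intro a b hba
      have hm : P.meet a b = b := by rw [P.meet_comm]; exact hba
      have hyp : P.sim (P.meet a b) b = P.one := by rw [hm, P.sim_self]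
      have hc : P.sim a (P.bsim (P.sim (P.meet a b) a) b) = P.one := C2 a b hyp
      rw [hm] at hc
      exact P.le_antisymm' (P.le_of_sim_eq_one hc) (P.le_bsim_sim a b)
    have ddag : ∀ a b, P.le b a → P.sim b (P.bsim a b) = a := by
      intro a b hba
      have hm : P.meet a b = b := by rw [P.meet_comm]; exact hba
      have hyp : P.bsim b (P.meet a b) = P.one := by rw [hm, P.bsim_self]
      have hc : P.bsim (P.sim b (P.bsim a (P.meet a b))) a = P.one := C3 a b hyp
      rw [hm] at hc
      exact P.le_antisymm' (P.le_of_bsim_eq_one hc) (P.le_sim_bsim a b)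
    intro x y
    constructor
    · have h1 := P.ineq1 dag y x
      rw [P.meet_comm y x] at h1
      exact P.le_antisymm' h1 (P.ineq1 dag x y)
    · have h1 := P.ineq2 ddag y x
      rw [P.meet_comm y x] at h1
      exact P.le_antisymm' h1 (P.ineq2 ddag x y)
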